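/- arXiv:1706.05706 — 3 statements merged into one kernel-verified Lean document; each statement's English description precedes it below -/
import Mathlib

section
/- (Thompson–McEnteggert) Let M be an n-by-n normal matrix with spectral decomposition M = Z Λ Z*, where Λ = diag(λ₁,…,λₙ) and Z = (z₁ … zₙ) is unitary. If λⱼ is a simple eigenvalue of M, then Adj(λⱼ I - M) = χ'_M(λⱼ) · zⱼ zⱼ*, where χ_M is the characteristic polynomial of M and χ'_M its derivative. -/
/-!
Conjugation by the unitary `Z` commutes with taking adjugates and preserves the characteristic
polynomial, so everything reduces to `Λ = diagonal λ`. There `λⱼ I - Λ` is diagonal with a zero in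
position `j`, so its adjugate is the diagonal matrix of products of all other entries, which keeps
only the entry `∏_{k ≠ j} (λⱼ - λₖ)` at `(j, j)`; by the product rule this is `χ'(λⱼ)` for
`χ = ∏ᵢ (X - λᵢ)`. Conjugating `single j j 1` back by `Z` gives `zⱼ zⱼ*`.
-/

open Matrix Polynomial

namespace Matrix

variable {n R : Type*} [Fintype n] [DecidableEq n] [CommRing R]

theorem adjugate_eq_det_smul_of_mul_eq_one {A B : Matrix n n R} (h : B * A = 1) :
    adjugate A = A.det • B := by
  calc adjugate A = B * A * adjugate A := by rw [h, Matrix.one_mul]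
    _ = A.det • B := by rw [Matrix.mul_assoc, mul_adjugate, Matrix.mul_smul, Matrix.mul_one]

theorem adjugate_diagonal_of_apply_eq_zero {d : n → R} {j : n} (hj : d j = 0) :
    adjugate (diagonal d) = Matrix.single j j (∏ k ∈ Finset.univ.erase j, d k) := by
  rw [adjugate_diagonal]
  ext i k
  rcases eq_or_ne i k with rfl | hik
  · rcases eq_or_ne i j with rfl | hij
    · simp
    · simp [hij.symm,
        Finset.prod_eq_zero (Finset.mem_erase.mpr ⟨Ne.symm hij, Finset.mem_univ j⟩) hj]
  · simp [single_apply, hik]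
    rintro rfl rfl
    exact (hik rfl).elim

variable [StarRing R]

theorem charpoly_unitary_conj {U : Matrix n n R} (hU : U ∈ unitaryGroup n R) (A : Matrix n n R) :
    (U * A * Uᴴ).charpoly = A.charpoly := by
  have hUU : Uᴴ * U = 1 := mem_unitaryGroup_iff'.mp hU
  rw [charpoly_mul_comm, ← Matrix.mul_assoc, hUU, Matrix.one_mul]

theorem adjugate_unitary_conj {U : Matrix n n R} (hU : U ∈ unitaryGroup n R) (A : Matrix n n R) :
    adjugate (U * A * Uᴴ) = U * adjugate A * Uᴴ := by
  have hUU : U * Uᴴ = 1 := mem_unitaryGroup_iff.mp hU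
  have hUU' : Uᴴ * U = 1 := mem_unitaryGroup_iff'.mp hU
  rw [adjugate_mul_distrib, adjugate_mul_distrib, adjugate_eq_det_smul_of_mul_eq_one hUU,
    adjugate_eq_det_smul_of_mul_eq_one hUU']
  simp only [Matrix.smul_mul, Matrix.mul_smul, smul_smul, ← det_mul, hUU, det_one, one_smul,
    Matrix.mul_assoc]

theorem mul_single_mul_conjTranspose (U : Matrix n n R) (j : n) (c : R) :
    U * Matrix.single j j c * Uᴴ = c • vecMulVec (fun i => U i j) (fun i => star (U i j)) := by
  ext i k
  simp [mul_apply, single_apply, vecMulVec_apply, mul_comm, ite_and, mul_assoc]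

end Matrix

theorem Polynomial.eval_derivative_prod_X_sub_C {ι R : Type*} [Fintype ι] [DecidableEq ι]
    [CommRing R] (lam : ι → R) (j : ι) :
    eval (lam j) (derivative (∏ i, (X - C (lam i)))) =
      ∏ k ∈ Finset.univ.erase j, (lam j - lam k) := by
  rw [← Finset.mul_prod_erase _ _ (Finset.mem_univ j), derivative_mul]
  simp [eval_prod]

theorem stmt_2_general (n : ℕ) (M Z : Matrix (Fin n) (Fin n) ℂ) (lam : Fin n → ℂ)
    (hZ : Z ∈ Matrix.unitaryGroup (Fin n) ℂ)
    (hM : M = Z * Matrix.diagonal lam * Zᴴ)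
    (j : Fin n) :
    (lam j • (1 : Matrix (Fin n) (Fin n) ℂ) - M).adjugate =
      Polynomial.eval (lam j) (Polynomial.derivative M.charpoly) •
        Matrix.vecMulVec (fun i => Z i j) (fun i => (starRingEnd ℂ) (Z i j)) := by
  have hZZ : Z * Zᴴ = 1 := mem_unitaryGroup_iff.mp hZ
  have hshift : lam j • (1 : Matrix (Fin n) (Fin n) ℂ) - M =
      Z * diagonal (fun i => lam j - lam i) * Zᴴ := by
    rw [hM, ← diagonal_sub, ← smul_one_eq_diagonal, Matrix.mul_sub, Matrix.sub_mul,
      Matrix.mul_smul, Matrix.smul_mul, Matrix.mul_one, hZZ]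
  rw [hshift, adjugate_unitary_conj hZ,
    adjugate_diagonal_of_apply_eq_zero (j := j) (sub_self (lam j)), mul_single_mul_conjTranspose,
    hM, charpoly_unitary_conj hZ, charpoly_diagonal, eval_derivative_prod_X_sub_C]
  rfl

/-- Thompson–McEnteggert formula: if `M = Z Λ Z*` is a spectral decomposition of the
normal matrix `M` and `λⱼ` is a simple eigenvalue, then
`Adj(λⱼ I - M) = χ'_M(λⱼ) · zⱼ zⱼ*`. -/
theorem stmt_2 (n : ℕ) (M Z : Matrix (Fin n) (Fin n) ℂ) (lam : Fin n → ℂ)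
    (hZ : Z ∈ Matrix.unitaryGroup (Fin n) ℂ)
    (hM : M = Z * Matrix.diagonal lam * Zᴴ)
    (j : Fin n) (hsimple : ∀ i : Fin n, i ≠ j → lam i ≠ lam j) :
    (lam j • (1 : Matrix (Fin n) (Fin n) ℂ) - M).adjugate =
      Polynomial.eval (lam j) (Polynomial.derivative M.charpoly) •
        Matrix.vecMulVec (fun i => Z i j) (fun i => (starRingEnd ℂ) (Z i j)) :=
  stmt_2_general n M Z lam hZ hM j
end

section
/- Let U be an n-by-n unitary matrix with simple eigenvalues whose eigenvectors all have nonzero k-th component, and let S be the diagonal matrix obtained from the identity by replacing the (k,k) entry with β ∈ S^1 \ {1}. Then U and US have no common eigenvalue. -/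
/-!
Suppose `U z = μ z` and `U S w = μ w` with `z, w ≠ 0`. Then `w k ≠ 0`, for otherwise `S w = w`
would be an eigenvector of `U` vanishing at `k`. Since `U` is unitary and `|μ| = 1`,
`⟪z, S w⟫ = ⟪U z, U S w⟫ = ⟪z, w⟫`, so `0 = ⟪z, S w - w⟫ = (β - 1) conj (z k) (w k)`, which
contradicts `β ≠ 1`.
-/

open Matrix

theorem Matrix.exists_mulVec_eq_smul_of_mem_spectrum {K n : Type*} [Field K] [Fintype n]
    [DecidableEq n] {A : Matrix n n K} {μ : K} (hμ : μ ∈ spectrum K A) :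
    ∃ v ≠ 0, A *ᵥ v = μ • v := by
  rw [← spectrum_toLin', ← Module.End.hasEigenvalue_iff_mem_spectrum] at hμ
  obtain ⟨v, hv⟩ := hμ.exists_hasEigenvector
  exact ⟨v, hv.2, by simpa using Module.End.mem_eigenspace_iff.mp hv.1⟩

theorem Matrix.star_mul_self_eq_one_of_mem_spectrum_of_mem_unitaryGroup {n : Type*} [Fintype n]
    [DecidableEq n] {U : Matrix n n ℂ} (hU : U ∈ unitaryGroup n ℂ) {μ : ℂ}
    (hμ : μ ∈ spectrum ℂ U) : star μ * μ = 1 := by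
  -- the L² operator norm only serves to make matrices a C⋆-algebra; the spectrum ignores it
  open scoped Matrix.Norms.L2Operator in
  rw [Complex.star_def, Complex.conj_mul', spectrum.norm_eq_one_of_unitary hU hμ]
  norm_num

section UnitaryGroup

variable {n α : Type*} [Fintype n] [DecidableEq n] [CommRing α] [StarRing α]
  {U : Matrix n n α}

theorem Matrix.star_mulVec_dotProduct_mulVec_of_mem_unitaryGroup (hU : U ∈ unitaryGroup n α)
    (x y : n → α) : star (U *ᵥ x) ⬝ᵥ (U *ᵥ y) = star x ⬝ᵥ y := by
  rw [star_mulVec, dotProduct_mulVec, vecMul_vecMul, ← star_eq_conjTranspose,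
    mem_unitaryGroup_iff'.mp hU, vecMul_one]

theorem Matrix.star_dotProduct_eq_of_mulVec_eq_smul (hU : U ∈ unitaryGroup n α) {μ : α}
    (hμ : star μ * μ = 1) {z v w : n → α} (hz : U *ᵥ z = μ • z) (hv : U *ᵥ v = μ • w) :
    star z ⬝ᵥ v = star z ⬝ᵥ w := by
  rw [← star_mulVec_dotProduct_mulVec_of_mem_unitaryGroup hU, hz, hv, star_smul,
    smul_dotProduct, dotProduct_smul, smul_smul, smul_eq_mul, hμ, one_mul]

end UnitaryGroup

theorem Matrix.diagonal_update_one_mulVec_sub {n α : Type*} [Fintype n] [DecidableEq n]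
    [CommRing α] (k : n) (β : α) (w : n → α) :
    diagonal (Function.update (fun _ => 1) k β) *ᵥ w - w = Pi.single k ((β - 1) * w k) := by
  ext i
  rcases eq_or_ne i k with rfl | hik
  · simp [mulVec_diagonal, sub_mul]
  · simp [mulVec_diagonal, hik]

theorem stmt_3_general (n : ℕ) (U : Matrix (Fin n) (Fin n) ℂ)
    (hU : U ∈ Matrix.unitaryGroup (Fin n) ℂ)
    (k : Fin n)
    (hvec : ∀ (μ : ℂ) (z : Fin n → ℂ), z ≠ 0 → U.mulVec z = μ • z → z k ≠ 0)
    (β : ℂ) (hβ1 : β ≠ 1)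
    (S : Matrix (Fin n) (Fin n) ℂ)
    (hS : S = Matrix.diagonal (Function.update (fun _ : Fin n => (1 : ℂ)) k β)) :
    spectrum ℂ U ∩ spectrum ℂ (U * S) = ∅ := by
  refine Set.eq_empty_iff_forall_notMem.mpr fun μ ⟨hμU, hμUS⟩ => ?_
  obtain ⟨z, hz0, hz⟩ := exists_mulVec_eq_smul_of_mem_spectrum hμU
  obtain ⟨w, hw0, hw⟩ := exists_mulVec_eq_smul_of_mem_spectrum hμUS
  rw [← mulVec_mulVec] at hw
  have hSw : S *ᵥ w - w = Pi.single k ((β - 1) * w k) :=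
    hS ▸ diagonal_update_one_mulVec_sub k β w
  have hwk : w k ≠ 0 := by
    intro hwk
    rw [hwk, mul_zero, Pi.single_zero, sub_eq_zero] at hSw
    exact hvec μ w hw0 (by rwa [hSw] at hw) hwk
  have hzw := star_dotProduct_eq_of_mulVec_eq_smul hU
    (star_mul_self_eq_one_of_mem_spectrum_of_mem_unitaryGroup hU hμU) hz hw
  have hprod : star (z k) * ((β - 1) * w k) = 0 := by
    rw [← Pi.star_apply, ← dotProduct_single, ← hSw, dotProduct_sub, hzw, sub_self]
  simp [hvec μ z hz0 hz, sub_eq_zero, hβ1, hwk] at hprod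

/-- If the unitary `U` has simple eigenvalues, all of whose eigenvectors have nonzero `k`-th
component, and `S` is the identity with the `(k,k)` entry replaced by `β ∈ S¹ \ {1}`,
then `U` and `US` have no common eigenvalue. -/
theorem stmt_3 (n : ℕ) (U : Matrix (Fin n) (Fin n) ℂ)
    (hU : U ∈ Matrix.unitaryGroup (Fin n) ℂ)
    (hsimple : ∀ μ : ℂ, Polynomial.rootMultiplicity μ U.charpoly ≤ 1)
    (k : Fin n)
    (hvec : ∀ (μ : ℂ) (z : Fin n → ℂ), z ≠ 0 → U.mulVec z = μ • z → z k ≠ 0)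
    (β : ℂ) (hβ : ‖β‖ = 1) (hβ1 : β ≠ 1)
    (S : Matrix (Fin n) (Fin n) ℂ)
    (hS : S = Matrix.diagonal (Function.update (fun _ : Fin n => (1 : ℂ)) k β)) :
    spectrum ℂ U ∩ spectrum ℂ (U * S) = ∅ :=
  stmt_3_general n U hU k hvec β hβ1 S hS
end

section
/- Every eigenvector of the (n+1)-by-(n+1) CMV matrix C(α₀,…,α_{n-1}, bₙ), with αⱼ ∈ 𝔻 and bₙ ∈ S^1, has all components nonzero. -/
noncomputable section
open Matrix Polynomial

/-- `ρ(α) = (1-|α|²)^{1/2}` viewed as a complex number. -/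
def rho (a : ℂ) : ℂ := (Real.sqrt (1 - ‖a‖ ^ 2) : ℝ)

/-- The 2×2 block `Θ(α)`. -/
def Theta (a : ℂ) : Matrix (Fin 2) (Fin 2) ℂ :=
  !![(starRingEnd ℂ) a, rho a; rho a, -a]

/-- The factor `L = Θ(α₀) ⊕ Θ(α₂) ⊕ ⋯` (last diagonal entry `conj b` when `n` is even). -/
def Lmat (n : ℕ) (α : ℕ → ℂ) (b : ℂ) : Matrix (Fin (n+1)) (Fin (n+1)) ℂ :=
  Matrix.of fun i j =>
    if n % 2 = 0 ∧ i.val = n then (if j.val = n then (starRingEnd ℂ) b else 0)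
    else if n % 2 = 0 ∧ j.val = n then 0
    else if i.val % 2 = 0 then
      if j.val = i.val then (starRingEnd ℂ) (α i.val)
      else if j.val = i.val + 1 then rho (α i.val) else 0
    else
      if j.val = i.val - 1 then rho (α (i.val - 1))
      else if j.val = i.val then -(α (i.val - 1)) else 0

/-- The factor `M = 1 ⊕ Θ(α₁) ⊕ Θ(α₃) ⊕ ⋯` (last diagonal entry `conj b` when `n` is odd). -/
def Mmat (n : ℕ) (α : ℕ → ℂ) (b : ℂ) : Matrix (Fin (n+1)) (Fin (n+1)) ℂ :=
  Matrix.of fun i j =>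
    if i.val = 0 then (if j.val = 0 then 1 else 0)
    else if n % 2 = 1 ∧ i.val = n then (if j.val = n then (starRingEnd ℂ) b else 0)
    else if n % 2 = 1 ∧ j.val = n then 0
    else if i.val % 2 = 1 then
      if j.val = i.val then (starRingEnd ℂ) (α i.val)
      else if j.val = i.val + 1 then rho (α i.val) else 0
    else
      if j.val = i.val - 1 then rho (α (i.val - 1))
      else if j.val = i.val then -(α (i.val - 1)) else 0

/-- The `(n+1)×(n+1)` CMV matrix `C(α₀,…,α_{n-1},bₙ) = L·M`. -/
def CMV (n : ℕ) (α : ℕ → ℂ) (b : ℂ) : Matrix (Fin (n+1)) (Fin (n+1)) ℂ :=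
  Lmat n α b * Mmat n α b

/-!
Put `y = M z`, so that `L y = μ z`. Each `Θ(αⱼ)` block of `L` or `M` is one step of the Szegő
recursion: up to the nonzero factor `∏_{j<i} ρⱼ μ^(j mod 2)`, the pair `(zᵢ, yᵢ)` (`i` even) or
`(yᵢ, μ zᵢ)` (`i` odd) equals `z₀ (φᵢ(μ), φᵢ*(μ))`. As `L` and `M` are invertible, `μ ≠ 0`, and
then `z ≠ 0` forces `z₀ ≠ 0`. The last row gives `μ φₙ(μ) = conj b φₙ*(μ)`; since
`|φₖ*(μ)|² - |μ|²|φₖ(μ)|²` has the sign of `1 - |μ|²` off the unit circle, `|μ| = 1`. On the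
circle `|φₖ*| = |φₖ|` and `|φₖ₊₁| ≥ (1 - |αₖ|)|φₖ|`, so no `φᵢ(μ)`, `φᵢ*(μ)` vanishes.
-/

lemma rho_sq {a : ℂ} (ha : ‖a‖ ≤ 1) : rho a ^ 2 = 1 - a * starRingEnd ℂ a := by
  have h : (0 : ℝ) ≤ 1 - ‖a‖ ^ 2 := by nlinarith [norm_nonneg a]
  rw [rho, ← Complex.ofReal_pow, Real.sq_sqrt h, Complex.mul_conj']
  push_cast
  ring

lemma rho_ne_zero {a : ℂ} (ha : ‖a‖ < 1) : rho a ≠ 0 := by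
  rw [rho, Complex.ofReal_ne_zero]
  exact (Real.sqrt_pos.mpr (by nlinarith [norm_nonneg a])).ne'

/-- One step of the Szegő recursion `φₖ₊₁ = z φₖ - conj αₖ φₖ*`, `φₖ₊₁* = φₖ* - αₖ z φₖ`,
acting on the pair `(φₖ(z), φₖ*(z))`. -/
def szegoStep (a μ : ℂ) (p : ℂ × ℂ) : ℂ × ℂ :=
  (μ * p.1 - starRingEnd ℂ a * p.2, p.2 - a * μ * p.1)

/-- `(φₖ(μ), φₖ*(μ))` for the monic orthogonal polynomials with Verblunsky coefficients `α`. -/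
def szego (μ : ℂ) (α : ℕ → ℂ) : ℕ → ℂ × ℂ
  | 0 => (1, 1)
  | k + 1 => szegoStep (α k) μ (szego μ α k)

lemma szegoStep_smul (a μ c : ℂ) (p : ℂ × ℂ) :
    szegoStep a μ (c • p) = c • szegoStep a μ p := by
  simp only [szegoStep, Prod.smul_mk, Prod.smul_fst, Prod.smul_snd, smul_eq_mul]
  ext <;> ring

lemma norm_sq_szegoStep (a μ : ℂ) (p : ℂ × ℂ) :
    ‖(szegoStep a μ p).2‖ ^ 2 - ‖(szegoStep a μ p).1‖ ^ 2
      = (1 - ‖a‖ ^ 2) * (‖p.2‖ ^ 2 - ‖μ‖ ^ 2 * ‖p.1‖ ^ 2) := by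
  apply Complex.ofReal_injective
  push_cast
  simp only [← Complex.mul_conj', szegoStep, map_sub, map_mul, Complex.conj_conj]
  ring

lemma szego_norm_sq_sign {μ : ℂ} {α : ℕ → ℂ} (hμ : ‖μ‖ ≠ 1) :
    ∀ k, (∀ j < k, ‖α j‖ < 1) →
      0 < (1 - ‖μ‖ ^ 2) * (‖(szego μ α k).2‖ ^ 2 - ‖μ‖ ^ 2 * ‖(szego μ α k).1‖ ^ 2)
  | 0, _ => by
    have : ‖μ‖ ^ 2 ≠ 1 := by rwa [Ne, pow_eq_one_iff_of_nonneg (norm_nonneg μ) two_ne_zero]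
    simp only [szego, norm_one, one_pow, mul_one]
    exact mul_self_pos.mpr (sub_ne_zero.mpr this.symm)
  | k + 1, hα => by
    have ih := szego_norm_sq_sign hμ k fun j hj => hα j (by omega)
    have hak : ‖α k‖ ^ 2 < 1 := by nlinarith [hα k (by omega), norm_nonneg (α k)]
    have key := norm_sq_szegoStep (α k) μ (szego μ α k)
    simp only [szego] at key ⊢
    nlinarith [mul_pos (sub_pos.mpr hak) ih, sq_nonneg (1 - ‖μ‖ ^ 2),
      sq_nonneg ‖(szegoStep (α k) μ (szego μ α k)).1‖]

lemma norm_szego_snd_eq_norm_fst {μ : ℂ} (α : ℕ → ℂ) (hμ : ‖μ‖ = 1) :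
    ∀ k, ‖(szego μ α k).2‖ = ‖(szego μ α k).1‖
  | 0 => rfl
  | k + 1 => by
    have key := norm_sq_szegoStep (α k) μ (szego μ α k)
    rw [hμ, one_pow, one_mul, norm_szego_snd_eq_norm_fst α hμ k, sub_self, mul_zero,
      sub_eq_zero] at key
    exact (pow_left_inj₀ (norm_nonneg _) (norm_nonneg _) two_ne_zero).mp key

lemma szego_fst_ne_zero {μ : ℂ} {α : ℕ → ℂ} (hμ : ‖μ‖ = 1) :
    ∀ k, (∀ j < k, ‖α j‖ < 1) → (szego μ α k).1 ≠ 0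
  | 0, _ => one_ne_zero
  | k + 1, hα => by
    have ih := norm_pos_iff.mpr (szego_fst_ne_zero hμ k fun j hj => hα j (by omega))
    have hak := hα k (by omega)
    -- `|φₖ₊₁| ≥ |μ φₖ| - |αₖ φₖ*| = (1 - |αₖ|) |φₖ|`
    have h := norm_sub_norm_le (μ * (szego μ α k).1) (starRingEnd ℂ (α k) * (szego μ α k).2)
    rw [norm_mul, norm_mul, Complex.norm_conj, hμ, one_mul, norm_szego_snd_eq_norm_fst α hμ] at h
    refine norm_pos_iff.mp ?_
    simp only [szego, szegoStep]
    nlinarith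

lemma szego_snd_ne_zero {μ : ℂ} {α : ℕ → ℂ} (hμ : ‖μ‖ = 1) (k : ℕ)
    (hα : ∀ j < k, ‖α j‖ < 1) : (szego μ α k).2 ≠ 0 := by
  rw [← norm_ne_zero_iff, norm_szego_snd_eq_norm_fst α hμ, norm_ne_zero_iff]
  exact szego_fst_ne_zero hμ k hα

lemma norm_eq_one_of_szego {μ c : ℂ} {α : ℕ → ℂ} {n : ℕ} (hα : ∀ j < n, ‖α j‖ < 1)
    (hc : ‖c‖ = 1) (h : μ * (szego μ α n).1 = c * (szego μ α n).2) : ‖μ‖ = 1 := by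
  by_contra hμ
  have hsign := szego_norm_sq_sign hμ n hα
  have hnorm := congrArg (‖·‖ ^ 2) h
  simp only [norm_mul, hc, one_mul, mul_pow] at hnorm
  rw [← hnorm, sub_self, mul_zero] at hsign
  exact lt_irrefl 0 hsign

lemma Theta_mulVec (a w₀ w₁ : ℂ) :
    Theta a *ᵥ ![w₀, w₁] = ![starRingEnd ℂ a * w₀ + rho a * w₁, rho a * w₀ + -a * w₁] := by
  ext r
  fin_cases r <;> simp [Theta, mulVec, dotProduct, Fin.sum_univ_two]

lemma rho_smul_eq_szegoStep {a μ x₀ x₁ w₀ w₁ : ℂ} (ha : ‖a‖ ≤ 1)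
    (h : Theta a *ᵥ ![w₀, w₁] = μ • ![x₀, x₁]) :
    rho a • (w₁, μ * x₁) = szegoStep a μ (x₀, w₀) := by
  rw [Theta_mulVec, smul_vec2, vecCons_inj, vecCons_inj, smul_eq_mul, smul_eq_mul] at h
  obtain ⟨h₀, h₁, -⟩ := h
  simp only [szegoStep, Prod.smul_mk, smul_eq_mul, Prod.mk.injEq]
  constructor
  · linear_combination h₀
  · linear_combination -rho a * h₁ + w₀ * rho_sq ha - a * h₀

lemma Theta_mulVec_eq_zero {a w₀ w₁ : ℂ} (ha : ‖a‖ < 1) (h : Theta a *ᵥ ![w₀, w₁] = 0) :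
    w₀ = 0 ∧ w₁ = 0 := by
  have := rho_smul_eq_szegoStep (μ := 0) (x₀ := 0) (x₁ := 0) ha.le (by simpa using h)
  simp only [szegoStep, Prod.smul_mk, smul_eq_mul, Prod.mk.injEq] at this
  have hw₀ : w₀ = 0 := by linear_combination -this.2
  refine ⟨hw₀, (mul_eq_zero.mp ?_).resolve_left (rho_ne_zero ha)⟩
  simpa [hw₀] using this.1

lemma mulVec_apply_eq_add {ι R : Type*} [Fintype ι] [NonUnitalNonAssocSemiring R]
    (A : Matrix ι ι R) (v : ι → R) {i a c : ι} (hac : a ≠ c)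
    (h : ∀ j, j ≠ a → j ≠ c → A i j = 0) : (A *ᵥ v) i = A i a * v a + A i c * v c :=
  Fintype.sum_eq_add a c hac fun j hj => by simp [h j hj.1 hj.2]

lemma mulVec_apply_eq_mul {ι R : Type*} [Fintype ι] [NonUnitalNonAssocSemiring R]
    (A : Matrix ι ι R) (v : ι → R) {i a : ι} (h : ∀ j, j ≠ a → A i j = 0) :
    (A *ᵥ v) i = A i a * v a :=
  Fintype.sum_eq_single a fun j hj => by simp [h j hj]

section Rows

variable {n : ℕ} (α : ℕ → ℂ) (b : ℂ) (v : Fin (n + 1) → ℂ)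

lemma Lmat_mulVec_block {j : Fin n} (hj : Even (j : ℕ)) :
    Theta (α j) *ᵥ ![v j.castSucc, v j.succ]
      = ![(Lmat n α b *ᵥ v) j.castSucc, (Lmat n α b *ᵥ v) j.succ] := by
  have hne : j.castSucc ≠ j.succ := Fin.castSucc_lt_succ.ne
  rw [Nat.even_iff] at hj
  have := j.isLt
  rw [Theta_mulVec, mulVec_apply_eq_add _ _ hne, mulVec_apply_eq_add _ _ hne]
  · simp only [Lmat, of_apply, Fin.val_castSucc, Fin.val_succ, Nat.add_sub_cancel]
    split_ifs <;> first | rfl | contradiction | omega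
  all_goals
    intro k hk₁ hk₂
    rw [Ne, Fin.ext_iff] at hk₁ hk₂
    simp only [Lmat, of_apply, Fin.val_castSucc, Fin.val_succ] at hk₁ hk₂ ⊢
    split_ifs <;> first | rfl | contradiction | omega

lemma Mmat_mulVec_block {j : Fin n} (hj : Odd (j : ℕ)) :
    Theta (α j) *ᵥ ![v j.castSucc, v j.succ]
      = ![(Mmat n α b *ᵥ v) j.castSucc, (Mmat n α b *ᵥ v) j.succ] := by
  have hne : j.castSucc ≠ j.succ := Fin.castSucc_lt_succ.ne
  rw [Nat.odd_iff] at hj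
  have := j.isLt
  rw [Theta_mulVec, mulVec_apply_eq_add _ _ hne, mulVec_apply_eq_add _ _ hne]
  · simp only [Mmat, of_apply, Fin.val_castSucc, Fin.val_succ, Nat.add_sub_cancel]
    split_ifs <;> first | rfl | contradiction | omega
  all_goals
    intro k hk₁ hk₂
    rw [Ne, Fin.ext_iff] at hk₁ hk₂
    simp only [Mmat, of_apply, Fin.val_castSucc, Fin.val_succ] at hk₁ hk₂ ⊢
    split_ifs <;> first | rfl | contradiction | omega

lemma Lmat_mulVec_last (hn : Even n) :
    (Lmat n α b *ᵥ v) (Fin.last n) = starRingEnd ℂ b * v (Fin.last n) := by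
  rw [Nat.even_iff] at hn
  have hrow (k) (hk : k ≠ Fin.last n) : Lmat n α b (Fin.last n) k = 0 := by
    have : (k : ℕ) ≠ n := fun h => hk (Fin.ext h)
    simp [Lmat, hn, this]
  rw [mulVec_apply_eq_mul _ _ hrow]
  simp [Lmat, hn]

lemma Mmat_mulVec_last (hn : Odd n) :
    (Mmat n α b *ᵥ v) (Fin.last n) = starRingEnd ℂ b * v (Fin.last n) := by
  rw [Nat.odd_iff] at hn
  have : n ≠ 0 := by omega
  have hrow (k) (hk : k ≠ Fin.last n) : Mmat n α b (Fin.last n) k = 0 := by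
    have hkn : (k : ℕ) ≠ n := fun h => hk (Fin.ext h)
    simp [Mmat, hn, this, hkn]
  rw [mulVec_apply_eq_mul _ _ hrow]
  simp [Mmat, hn, this]

lemma Mmat_mulVec_zero : (Mmat n α b *ᵥ v) 0 = v 0 := by
  have hrow (k) (hk : k ≠ 0) : Mmat n α b 0 k = 0 := by simp [Mmat, hk]
  rw [mulVec_apply_eq_mul _ _ hrow]
  simp [Mmat]

end Rows

lemma Fin.eq_zero_or_eq_last_or_exists_block {n : ℕ} (p : ℕ) (i : Fin (n + 1)) :
    (i = 0 ∧ p % 2 = 1) ∨ (i = Fin.last n ∧ n % 2 = p % 2) ∨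
      ∃ j : Fin n, (j : ℕ) % 2 = p % 2 ∧ (j.castSucc = i ∨ j.succ = i) := by
  by_cases hp : (i : ℕ) % 2 = p % 2
  · by_cases hi : i = Fin.last n
    · exact Or.inr (Or.inl ⟨hi, by simpa [hi] using hp⟩)
    · obtain ⟨j, rfl⟩ := Fin.exists_castSucc_eq.mpr hi
      exact Or.inr (Or.inr ⟨j, by simpa using hp, Or.inl rfl⟩)
  · by_cases hi : i = 0
    · subst hi
      exact Or.inl ⟨rfl, by rw [Fin.val_zero] at hp; omega⟩
    · obtain ⟨j, rfl⟩ := Fin.exists_succ_eq.mpr hi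
      exact Or.inr (Or.inr ⟨j, by rw [Fin.val_succ] at hp; omega, Or.inr rfl⟩)

section Injective

variable {n : ℕ} {α : ℕ → ℂ} {b : ℂ} {v : Fin (n + 1) → ℂ}

lemma Lmat_mulVec_eq_zero (hα : ∀ j < n, ‖α j‖ < 1) (hb : b ≠ 0)
    (h : Lmat n α b *ᵥ v = 0) : v = 0 := by
  funext i
  rcases Fin.eq_zero_or_eq_last_or_exists_block 0 i with ⟨-, h01⟩ | ⟨rfl, hn⟩ | ⟨j, hj, hji⟩
  · exact absurd h01 zero_ne_one
  · have := Lmat_mulVec_last α b v (Nat.even_iff.mpr hn)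
    simpa [h, hb] using this.symm
  · have hblock := Lmat_mulVec_block α b v (Nat.even_iff.mpr hj)
    rw [h] at hblock
    obtain ⟨h₀, h₁⟩ := Theta_mulVec_eq_zero (hα j j.isLt) (by simpa using hblock)
    rcases hji with rfl | rfl <;> assumption

lemma Mmat_mulVec_eq_zero (hα : ∀ j < n, ‖α j‖ < 1) (hb : b ≠ 0)
    (h : Mmat n α b *ᵥ v = 0) : v = 0 := by
  funext i
  rcases Fin.eq_zero_or_eq_last_or_exists_block 1 i with ⟨rfl, -⟩ | ⟨rfl, hn⟩ | ⟨j, hj, hji⟩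
  · simpa [h] using (Mmat_mulVec_zero α b v).symm
  · have := Mmat_mulVec_last α b v (Nat.odd_iff.mpr hn)
    simpa [h, hb] using this.symm
  · have hblock := Mmat_mulVec_block α b v (Nat.odd_iff.mpr hj)
    rw [h] at hblock
    obtain ⟨h₀, h₁⟩ := Theta_mulVec_eq_zero (hα j j.isLt) (by simpa using hblock)
    rcases hji with rfl | rfl <;> assumption

end Injective

/-- For an eigenvector `z` of `L M` with `y = M z`, these pairs follow the Szegő recursion up to
nonzero scalars. -/
def cmvState {n : ℕ} (μ : ℂ) (z y : Fin (n + 1) → ℂ) (i : Fin (n + 1)) : ℂ × ℂ :=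
  if Even (i : ℕ) then (z i, y i) else (y i, μ * z i)

section Eigenvector

variable {n : ℕ} {α : ℕ → ℂ} {b μ : ℂ} {z y : Fin (n + 1) → ℂ}

lemma cmvState_of_even {i : Fin (n + 1)} (hi : Even (i : ℕ)) : cmvState μ z y i = (z i, y i) :=
  if_pos hi

lemma cmvState_of_odd {i : Fin (n + 1)} (hi : Odd (i : ℕ)) :
    cmvState μ z y i = (y i, μ * z i) :=
  if_neg (Nat.not_even_iff_odd.mpr hi)

lemma smul_cmvState_succ (hα : ∀ j < n, ‖α j‖ < 1) (hL : Lmat n α b *ᵥ y = μ • z)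
    (hM : Mmat n α b *ᵥ z = y) (j : Fin n) :
    (rho (α j) * μ ^ ((j : ℕ) % 2)) • cmvState μ z y j.succ
      = szegoStep (α j) μ (cmvState μ z y j.castSucc) := by
  have ha := (hα j j.isLt).le
  have hsucc : (j.succ : ℕ) = j + 1 := Fin.val_succ j
  rcases Nat.even_or_odd (j : ℕ) with hj | hj
  · have h := rho_smul_eq_szegoStep ha (μ := μ) (x₀ := z j.castSucc) (x₁ := z j.succ)
      (by rw [Lmat_mulVec_block α b y hj, hL, smul_vec2]; rfl)
    rwa [cmvState_of_odd (hsucc ▸ hj.add_one), cmvState_of_even hj, Nat.even_iff.mp hj,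
      pow_zero, mul_one]
  · have h := rho_smul_eq_szegoStep ha (μ := μ) (w₀ := μ * z j.castSucc) (w₁ := μ * z j.succ)
      (x₀ := y j.castSucc) (x₁ := y j.succ)
      (by rw [← hM, ← Mmat_mulVec_block α b z hj, ← mulVec_smul, smul_vec2]; rfl)
    rw [cmvState_of_even (hsucc ▸ hj.add_one), cmvState_of_odd hj, Nat.odd_iff.mp hj, pow_one,
      ← h, Prod.smul_mk, Prod.smul_mk, smul_eq_mul, smul_eq_mul, smul_eq_mul]
    congr 1 <;> ring

lemma smul_cmvState (hα : ∀ j < n, ‖α j‖ < 1) (hL : Lmat n α b *ᵥ y = μ • z)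
    (hM : Mmat n α b *ᵥ z = y) (i : Fin (n + 1)) :
    (∏ k ∈ Finset.range i, rho (α k) * μ ^ (k % 2)) • cmvState μ z y i
      = z 0 • szego μ α i := by
  induction i using Fin.induction with
  | zero => simp [cmvState, szego, ← hM, Mmat_mulVec_zero]
  | succ j ih =>
    rw [Fin.val_castSucc] at ih
    rw [Fin.val_succ, Finset.prod_range_succ, mul_smul, smul_cmvState_succ hα hL hM,
      ← szegoStep_smul, ih, szegoStep_smul, szego]

lemma cmvState_last (hL : Lmat n α b *ᵥ y = μ • z) (hM : Mmat n α b *ᵥ z = y) :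
    μ * (cmvState μ z y (Fin.last n)).1 = starRingEnd ℂ b * (cmvState μ z y (Fin.last n)).2 := by
  rcases Nat.even_or_odd n with hn | hn
  · have h := congrFun hL (Fin.last n)
    rw [Lmat_mulVec_last α b y hn, Pi.smul_apply, smul_eq_mul] at h
    rw [cmvState_of_even hn, h]
  · have h := congrFun hM (Fin.last n)
    rw [Mmat_mulVec_last α b z hn] at h
    rw [cmvState_of_odd hn, ← h]
    ring

lemma apply_zero_ne_zero (hα : ∀ j < n, ‖α j‖ < 1) (hL : Lmat n α b *ᵥ y = μ • z)
    (hM : Mmat n α b *ᵥ z = y) (hμ : μ ≠ 0) (hz : z ≠ 0) : z 0 ≠ 0 := by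
  intro h0
  refine hz (funext fun i => ?_)
  have hi := smul_cmvState hα hL hM i
  have hc : ∏ k ∈ Finset.range i, rho (α k) * μ ^ (k % 2) ≠ 0 :=
    Finset.prod_ne_zero_iff.mpr fun k hk =>
      mul_ne_zero (rho_ne_zero (hα k ((Finset.mem_range.mp hk).trans_le i.is_le)))
        (pow_ne_zero _ hμ)
  rw [h0, zero_smul, smul_eq_zero_iff_right hc] at hi
  rcases Nat.even_or_odd (i : ℕ) with he | ho
  · simpa [cmvState_of_even he] using congrArg Prod.fst hi
  · simpa [cmvState_of_odd ho, hμ] using congrArg Prod.snd hi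

lemma szego_boundary (hα : ∀ j < n, ‖α j‖ < 1) (hL : Lmat n α b *ᵥ y = μ • z)
    (hM : Mmat n α b *ᵥ z = y) (hz0 : z 0 ≠ 0) :
    μ * (szego μ α n).1 = starRingEnd ℂ b * (szego μ α n).2 := by
  have hn := Prod.ext_iff.mp (smul_cmvState hα hL hM (Fin.last n))
  simp only [Prod.smul_fst, Prod.smul_snd, smul_eq_mul, Fin.val_last] at hn
  refine mul_left_cancel₀ hz0 ?_
  linear_combination -μ * hn.1 + starRingEnd ℂ b * hn.2
    + (∏ k ∈ Finset.range n, rho (α k) * μ ^ (k % 2)) * cmvState_last hL hM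

end Eigenvector

/-- Every eigenvector of the CMV matrix `C(α₀,…,α_{n-1},bₙ)` has all components nonzero. -/
theorem stmt_7 (n : ℕ) (α : ℕ → ℂ) (hα : ∀ j < n, ‖α j‖ < 1)
    (b : ℂ) (hb : ‖b‖ = 1)
    (μ : ℂ) (z : Fin (n+1) → ℂ) (hz : z ≠ 0)
    (heig : (CMV n α b).mulVec z = μ • z) :
    ∀ i : Fin (n+1), z i ≠ 0 := by
  obtain ⟨y, hM⟩ : ∃ y, Mmat n α b *ᵥ z = y := ⟨_, rfl⟩
  have hL : Lmat n α b *ᵥ y = μ • z := by rwa [← hM, mulVec_mulVec]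
  have hb0 : b ≠ 0 := norm_ne_zero_iff.mp (by simp [hb])
  have hμ : μ ≠ 0 := by
    rintro rfl
    have hy : y = 0 := Lmat_mulVec_eq_zero hα hb0 (by simpa using hL)
    exact hz (Mmat_mulVec_eq_zero hα hb0 (hM.trans hy))
  have hz0 := apply_zero_ne_zero hα hL hM hμ hz
  have hμ1 := norm_eq_one_of_szego hα (by rw [Complex.norm_conj, hb]) (szego_boundary hα hL hM hz0)
  intro i hzi
  have hi := Prod.ext_iff.mp (smul_cmvState hα hL hM i)
  simp only [Prod.smul_fst, Prod.smul_snd, smul_eq_mul] at hi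
  have hαi : ∀ j < (i : ℕ), ‖α j‖ < 1 := fun j hj => hα j (by omega)
  rcases Nat.even_or_odd (i : ℕ) with he | ho
  · refine mul_ne_zero hz0 (szego_fst_ne_zero hμ1 i hαi) ?_
    rw [← hi.1, cmvState_of_even he, hzi, mul_zero]
  · refine mul_ne_zero hz0 (szego_snd_ne_zero hμ1 i hαi) ?_
    rw [← hi.2, cmvState_of_odd ho, hzi, mul_zero, mul_zero]
end
end
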